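/- arXiv:2101.06584 — 3 statements merged into one kernel-verified Lean document; each statement's English description precedes it below -/
import Mathlib

section
/- If a and b are floating-point numbers in a radix-2 precision-p format and fl denotes round-to-nearest, then the error of the floating-point addition, e = (a + b) - fl(a + b), is itself exactly representable as a floating-point number in the same format. -/
/-! The numbers `a`, `b` and `fl (a + b)` are integer multiples of `2 ^ g`, where `g` is the least
of their exponents, hence so is the error `r`. Since `a` and `b` are themselves candidates for the
nearest float, `|r| ≤ |a|` and `|r| ≤ |b|`; since the neighbours `(m ± 1) 2 ^ e` of
`fl (a + b) = m 2 ^ e` are candidates too, `|r| ≤ 2 ^ e / 2`. Whichever of the three exponents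
is `g`, this gives `|r| < 2 ^ p 2 ^ g`, so `r = M 2 ^ g` with `|M| < 2 ^ p`. -/

/-- Radix-2 precision-`p` floating-point numbers (unbounded exponent model). -/
def Fp (p : ℕ) : Set ℝ := {x | ∃ m e : ℤ, |m| < 2 ^ p ∧ x = (m : ℝ) * (2 : ℝ) ^ e}

open AddSubgroup

lemma int_mul_zpow_mem_zmultiples {g e : ℤ} (h : g ≤ e) (m : ℤ) :
    (m : ℝ) * 2 ^ e ∈ zmultiples ((2 : ℝ) ^ g) := by
  obtain ⟨k, rfl⟩ := Int.le.dest h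
  refine mem_zmultiples_iff.2 ⟨m * 2 ^ k, ?_⟩
  rw [zpow_add₀ two_ne_zero, zpow_natCast, zsmul_eq_mul]
  push_cast
  ring

lemma abs_int_mul_zpow_lt {p : ℕ} {m : ℤ} (hm : |m| < 2 ^ p) (e : ℤ) :
    |(m : ℝ) * 2 ^ e| < 2 ^ p * 2 ^ e := by
  rw [abs_mul, abs_of_pos (zpow_pos two_pos e : (0 : ℝ) < 2 ^ e)]
  gcongr
  exact_mod_cast hm

lemma mem_Fp_of_mem_zmultiples {p : ℕ} {x : ℝ} {g : ℤ} (hx : x ∈ zmultiples ((2 : ℝ) ^ g))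
    (h : |x| < 2 ^ p * 2 ^ g) : x ∈ Fp p := by
  obtain ⟨n, rfl⟩ := mem_zmultiples_iff.1 hx
  rw [zsmul_eq_mul] at h ⊢
  refine ⟨n, g, ?_, rfl⟩
  rw [abs_mul, abs_of_pos (zpow_pos two_pos g : (0 : ℝ) < 2 ^ g)] at h
  exact_mod_cast lt_of_mul_lt_mul_right h (zpow_pos two_pos g).le

lemma int_mul_zpow_mem_Fp_of_abs_le {p : ℕ} (hp : 0 < p) {n : ℤ} (hn : |n| ≤ 2 ^ p)
    (e : ℤ) : (n : ℝ) * 2 ^ e ∈ Fp p := by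
  rcases hn.lt_or_eq with hlt | heq
  · exact ⟨n, e, hlt, rfl⟩
  -- `±2^p` is not a valid significand, but `±2^(p-1)` with the next exponent is.
  obtain ⟨k, rfl⟩ := Nat.exists_eq_add_one_of_ne_zero hp.ne'
  have hk : |(2 : ℤ) ^ k| < 2 ^ (k + 1) := by
    rw [abs_of_pos (by positivity)]
    exact pow_lt_pow_right₀ one_lt_two k.lt_succ_self
  have hshift :
      (((2 : ℤ) ^ (k + 1) : ℤ) : ℝ) * 2 ^ e = (((2 : ℤ) ^ k : ℤ) : ℝ) * 2 ^ (e + 1) := by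
    push_cast
    rw [zpow_add_one₀ two_ne_zero, pow_succ]
    ring
  rcases abs_eq (by positivity) |>.mp heq with rfl | rfl
  · exact ⟨_, _, hk, hshift⟩
  · refine ⟨-2 ^ k, e + 1, by rwa [abs_neg], ?_⟩
    rw [Int.cast_neg, neg_mul, hshift]
    push_cast
    ring

lemma abs_le_half_of_abs_le_abs_add_of_abs_le_abs_sub {u c : ℝ} (hc : 0 < c)
    (hadd : |u| ≤ |u + c|) (hsub : |u| ≤ |u - c|) : |u| ≤ c / 2 := by
  have hadd' := sq_le_sq.mpr hadd
  have hsub' := sq_le_sq.mpr hsub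
  rw [abs_le]
  constructor <;> nlinarith

lemma abs_round_sub_le_half_zpow {p : ℕ} (hp : 0 < p) {fl : ℝ → ℝ}
    (hnear : ∀ x : ℝ, ∀ y ∈ Fp p, |fl x - x| ≤ |y - x|) (x : ℝ) {m e : ℤ}
    (hm : |m| < 2 ^ p) (hx : fl x = (m : ℝ) * 2 ^ e) : |fl x - x| ≤ 2 ^ e / 2 := by
  have hneighbour (ε : ℤ) (hε : |ε| = 1) : |fl x - x| ≤ |fl x - x + ε * 2 ^ e| := by
    have hmε : |m + ε| ≤ 2 ^ p := (abs_add_le m ε).trans (by omega)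
    convert hnear x _ (int_mul_zpow_mem_Fp_of_abs_le hp hmε e) using 2
    push_cast
    rw [hx]
    ring
  apply abs_le_half_of_abs_le_abs_add_of_abs_le_abs_sub (zpow_pos two_pos e)
  · simpa using hneighbour 1 rfl
  · simpa [← sub_eq_add_neg] using hneighbour (-1) rfl

/-- The error of a round-to-nearest floating-point addition is itself
exactly representable in the same format. -/
theorem twoSum_error_representable (p : ℕ) (hp : 0 < p) (fl : ℝ → ℝ)
    (hmem : ∀ x : ℝ, fl x ∈ Fp p)
    (hnear : ∀ x : ℝ, ∀ y ∈ Fp p, |fl x - x| ≤ |y - x|)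
    (a b : ℝ) (ha : a ∈ Fp p) (hb : b ∈ Fp p) :
    (a + b) - fl (a + b) ∈ Fp p := by
  obtain ⟨ma, ea, hma, rfl⟩ := id ha
  obtain ⟨mb, eb, hmb, rfl⟩ := id hb
  obtain ⟨mf, ef, hmf, hf⟩ := hmem (_ + _)
  set s := (ma : ℝ) * 2 ^ ea + (mb : ℝ) * 2 ^ eb
  have hr_a : |s - fl s| ≤ |(ma : ℝ) * 2 ^ ea| := by
    simpa [abs_sub_comm, s] using hnear s _ hb
  have hr_b : |s - fl s| ≤ |(mb : ℝ) * 2 ^ eb| := by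
    simpa [abs_sub_comm, s] using hnear s _ ha
  have hr_f : |s - fl s| ≤ 2 ^ ef / 2 := by
    simpa [abs_sub_comm] using abs_round_sub_le_half_zpow hp hnear s hmf hf
  apply mem_Fp_of_mem_zmultiples (g := min ea (min eb ef))
  · rw [hf]
    refine sub_mem (add_mem ?_ ?_) ?_ <;> apply int_mul_zpow_mem_zmultiples <;> omega
  · refine min_rec' (fun g => |s - fl s| < 2 ^ p * 2 ^ g)
      (hr_a.trans_lt (abs_int_mul_zpow_lt hma ea))
      (min_rec' (fun g => |s - fl s| < 2 ^ p * 2 ^ g)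
        (hr_b.trans_lt (abs_int_mul_zpow_lt hmb eb)) (hr_f.trans_lt ?_))
    have : (0 : ℝ) < 2 ^ ef := zpow_pos two_pos ef
    have : (1 : ℝ) ≤ 2 ^ p := one_le_pow₀ one_le_two
    nlinarith
end

section
/- Let a, b be floating-point numbers with |a| ≥ |b|, and let fl be round-to-nearest in a radix-2 format. Define s = fl(a + b) and t = fl(b - fl(s - a)). Then s + t = a + b exactly (Dekker's QuickTwoSum/Fast2Sum algorithm is an error-free transformation). -/
namespace QTS

lemma two_ne : (2:ℝ) ≠ 0 := by norm_num

lemma flFix {p : ℕ} {fl : ℝ → ℝ}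
    (hnear : ∀ x : ℝ, ∀ y ∈ Fp p, |fl x - x| ≤ |y - x|)
    {x : ℝ} (hx : x ∈ Fp p) : fl x = x := by
  have h := hnear x x hx
  simp only [sub_self, abs_zero] at h
  have h2 : |fl x - x| = 0 := le_antisymm h (abs_nonneg _)
  have := abs_eq_zero.mp h2
  linarith

lemma cast_lt_pow {p : ℕ} {m : ℤ} (hm : |m| < 2 ^ p) : |(m:ℝ)| < 2 ^ (p:ℤ) := by
  rw [← Int.cast_abs]
  exact_mod_cast hm

lemma mem_of_even (p : ℕ) (n f : ℤ) (h2 : 2 ∣ n) (hn : |n| < 2 ^ (p+1)) :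
    ((n:ℝ) * 2 ^ f) ∈ Fp p := by
  obtain ⟨w, rfl⟩ := h2
  refine ⟨w, f + 1, by rw [abs_mul] at hn; simp at hn; omega, ?_⟩
  push_cast
  rw [zpow_add₀ two_ne]
  ring

/-- Lemma D -/
lemma multiple_of_large (p : ℕ) (hp : 0 < p) {x : ℝ} (hx : x ∈ Fp p) (f : ℤ)
    (h : (2:ℝ) ^ ((p:ℤ) - 1) * 2 ^ f ≤ |x|) : ∃ n : ℤ, x = (n:ℝ) * 2 ^ f := by
  obtain ⟨m, g, hm, rfl⟩ := hx
  rcases le_or_gt f g with hfg | hfg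
  · refine ⟨m * 2 ^ (g - f).toNat, ?_⟩
    push_cast
    rw [← zpow_natCast (2:ℝ) (g-f).toNat, Int.toNat_of_nonneg (by omega),
      mul_assoc, ← zpow_add₀ two_ne]
    ring_nf
  · exfalso
    rw [abs_mul] at h
    have hg0 : (0:ℝ) < 2 ^ g := by positivity
    have habs : |(2:ℝ) ^ g| = 2 ^ g := abs_of_pos hg0
    rw [habs] at h
    have h1 : (2:ℝ) ^ (g+1) ≤ 2 ^ f := zpow_le_zpow_right₀ one_le_two (by omega)
    have h2 : (2:ℝ) ^ ((p:ℤ)-1) * 2 ^ (g+1) = 2 ^ (p:ℤ) * 2 ^ g := by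
      rw [← zpow_add₀ two_ne, ← zpow_add₀ two_ne]; ring_nf
    have h3 : (2:ℝ) ^ (p:ℤ) * 2 ^ g ≤ |(m:ℝ)| * 2 ^ g := by
      calc (2:ℝ) ^ (p:ℤ) * 2 ^ g = 2 ^ ((p:ℤ)-1) * 2 ^ (g+1) := h2.symm
        _ ≤ 2 ^ ((p:ℤ)-1) * 2 ^ f := by
            have : (0:ℝ) < 2 ^ ((p:ℤ)-1) := by positivity
            nlinarith
        _ ≤ |(m:ℝ)| * 2 ^ g := h
    have := cast_lt_pow hm
    nlinarith


/-- Lemma E : if |x| ≤ 2^p · 2^f then the nearest rounding error is ≤ 2^f/2. -/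
lemma round_err (p : ℕ) (hp : 0 < p) (fl : ℝ → ℝ)
    (hnear : ∀ x : ℝ, ∀ y ∈ Fp p, |fl x - x| ≤ |y - x|)
    (x : ℝ) (f : ℤ) (hx : |x| ≤ 2 ^ (p:ℤ) * 2 ^ f) :
    |fl x - x| ≤ 2 ^ f / 2 := by
  have hf0 : (0:ℝ) < 2 ^ f := by positivity
  set u : ℝ := x / 2 ^ f with hu
  set n : ℤ := round u with hn
  have hru : |u - (n:ℝ)| ≤ 1/2 := abs_sub_round u
  have hub : |u| ≤ 2 ^ (p:ℤ) := by
    rw [hu, abs_div, abs_of_pos hf0, div_le_iff₀ hf0]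
    exact hx
  have hnb : |n| ≤ 2 ^ p := by
    have h1 : |(n:ℝ)| ≤ 2 ^ (p:ℤ) + 1/2 := by
      calc |(n:ℝ)| ≤ |u| + |u - (n:ℝ)| := by
            have := abs_sub_abs_le_abs_sub (n:ℝ) u
            have := abs_sub_comm (n:ℝ) u
            rw [abs_sub_comm] at hru ⊢
            nlinarith [abs_sub_abs_le_abs_sub (n:ℝ) u, abs_nonneg (u - (n:ℝ))]
        _ ≤ 2 ^ (p:ℤ) + 1/2 := by linarith
    have h2 : ((|n|:ℤ):ℝ) < 2 ^ (p:ℤ) + 1 := by push_cast; rw [← Int.cast_abs] at h1 ⊢; linarith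
    have h3 : ((|n|:ℤ):ℝ) < ((2 ^ p + 1 : ℤ):ℝ) := by push_cast [← zpow_natCast]; exact_mod_cast h2
    have := Int.cast_lt.mp h3
    omega
  have hy : ((n:ℝ) * 2 ^ f) ∈ Fp p := by
    rcases lt_or_eq_of_le hnb with h | h
    · exact ⟨n, f, h, rfl⟩
    · apply mem_of_even
      · have : (2:ℤ) ∣ 2 ^ p := dvd_pow_self 2 (by omega)
        have : (2:ℤ) ∣ |n| := h ▸ this
        exact (dvd_abs 2 n).mp this
      · rw [h]; exact pow_lt_pow_right₀ (by norm_num) (by omega)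
  have h4 := hnear x _ hy
  calc |fl x - x| ≤ |(n:ℝ) * 2 ^ f - x| := h4
    _ = |(n:ℝ) - u| * 2 ^ f := by
        have he : (n:ℝ) * 2 ^ f - x = ((n:ℝ) - u) * 2 ^ f := by
          rw [hu]; field_simp
        rw [he, abs_mul, abs_of_pos hf0]
    _ ≤ 2 ^ f / 2 := by rw [abs_sub_comm]; nlinarith


/-- Lemma A : fl of a multiple of 2^e is a multiple of 2^e. -/
lemma fl_multiple (p : ℕ) (hp : 0 < p) (fl : ℝ → ℝ)
    (hmem : ∀ x : ℝ, fl x ∈ Fp p)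
    (hnear : ∀ x : ℝ, ∀ y ∈ Fp p, |fl x - x| ≤ |y - x|)
    (K e : ℤ) : ∃ S : ℤ, fl ((K:ℝ) * 2 ^ e) = (S:ℝ) * 2 ^ e := by
  set x : ℝ := (K:ℝ) * 2 ^ e with hxdef
  have he0 : (0:ℝ) < 2 ^ e := by positivity
  by_cases hK : |K| < 2 ^ p
  · exact ⟨K, flFix hnear ⟨K, e, hK, rfl⟩⟩
  push_neg at hK
  -- binade: 2^n ≤ |K| < 2^(n+1), n ≥ p
  set N : ℕ := K.natAbs with hN
  have hKN : |K| = (N:ℤ) := Int.abs_eq_natAbs K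
  have hKNR : |(K:ℝ)| = (N:ℝ) := by rw [← Int.cast_abs, hKN]; push_cast; rfl
  have hpN : 2 ^ p ≤ N := by rw [hKN] at hK; exact_mod_cast hK
  have hN0 : N ≠ 0 := by have : 0 < 2^p := pow_pos (by norm_num) p; omega
  set n : ℕ := Nat.log 2 N with hn
  have hlow : 2 ^ n ≤ N := Nat.pow_log_le_self 2 hN0
  have hhigh : N < 2 ^ (n + 1) := Nat.lt_pow_succ_log_self (by norm_num) N
  have hpn : p ≤ n := by
    by_contra hc
    push_neg at hc
    have h1 : n + 1 ≤ p := hc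
    have := Nat.pow_le_pow_right (by norm_num : 1 ≤ 2) h1
    omega
  set k : ℕ := n + 1 - p with hk
  have hk1 : 1 ≤ k := by omega
  have hpk : p + k = n + 1 := by omega
  -- |x| ≤ 2^p * 2^(e+k)
  have hxb : |x| ≤ 2 ^ (p:ℤ) * 2 ^ (e + (k:ℤ)) := by
    have hKR : |(K:ℝ)| ≤ 2 ^ ((p:ℤ) + (k:ℤ)) := by
      rw [hKNR]
      have : (N:ℝ) ≤ ((2 ^ (n+1) : ℕ):ℝ) := by exact_mod_cast hhigh.le
      calc (N:ℝ) ≤ ((2 ^ (n+1) : ℕ):ℝ) := this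
        _ = 2 ^ ((p:ℤ) + (k:ℤ)) := by
            push_cast
            rw [← zpow_natCast (2:ℝ) (n+1)]
            congr 1
            omega
    rw [hxdef, abs_mul, abs_of_pos he0]
    calc |(K:ℝ)| * 2 ^ e ≤ 2 ^ ((p:ℤ) + (k:ℤ)) * 2 ^ e := by nlinarith
      _ = 2 ^ (p:ℤ) * 2 ^ (e + (k:ℤ)) := by
          rw [← zpow_add₀ two_ne, ← zpow_add₀ two_ne]; ring_nf
  have herr : |fl x - x| ≤ 2 ^ (e + (k:ℤ)) / 2 := round_err p hp fl hnear x _ hxb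
  -- half ulp = 2^(e+k-1)
  have hhalf : (2:ℝ) ^ (e + (k:ℤ)) / 2 = 2 ^ (e + (k:ℤ) - 1) := by
    rw [zpow_sub₀ two_ne]; norm_num
  rw [hhalf] at herr
  -- lower bound on |x|
  have hxlow : (2:ℝ) ^ ((p:ℤ) + (k:ℤ) - 1) * 2 ^ e ≤ |x| := by
    rw [hxdef, abs_mul, abs_of_pos he0, hKNR]
    have h1 : ((2 ^ n : ℕ):ℝ) ≤ (N:ℝ) := by exact_mod_cast hlow
    have h2 : ((2 ^ n : ℕ):ℝ) = 2 ^ ((p:ℤ) + (k:ℤ) - 1) := by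
      push_cast
      rw [← zpow_natCast (2:ℝ) n]
      congr 1
      omega
    nlinarith [he0, h1, h2]
  -- then |fl x| ≥ (2^p - 1) * 2^(e+k-1) ≥ 2^(p-1) * 2^(e+k-1)
  have hfl_low : (2:ℝ) ^ ((p:ℤ) - 1) * 2 ^ (e + (k:ℤ) - 1) ≤ |fl x| := by
    have t1 : |x| - |fl x - x| ≤ |fl x| := by
      have := abs_sub_abs_le_abs_sub x (fl x)
      have := abs_sub_comm x (fl x)
      nlinarith [abs_sub_abs_le_abs_sub x (fl x), abs_sub_comm (fl x) x]
    have t2 : (2:ℝ) ^ ((p:ℤ) + (k:ℤ) - 1) * 2 ^ e - 2 ^ (e + (k:ℤ) - 1) ≤ |fl x| := by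
      linarith
    have t3 : (2:ℝ) ^ ((p:ℤ) + (k:ℤ) - 1) * 2 ^ e = 2 ^ (p:ℤ) * 2 ^ (e + (k:ℤ) - 1) := by
      rw [← zpow_add₀ two_ne, ← zpow_add₀ two_ne]; ring_nf
    have t4 : (2:ℝ) ^ ((p:ℤ) - 1) * 2 ^ (e + (k:ℤ) - 1) ≤ 2 ^ (p:ℤ) * 2 ^ (e + (k:ℤ) - 1) - 2 ^ (e + (k:ℤ) - 1) := by
      have e1 : (0:ℝ) < 2 ^ (e + (k:ℤ) - 1) := by positivity
      have e2 : (2:ℝ) ^ ((p:ℤ) - 1) + 1 ≤ 2 ^ (p:ℤ) := by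
        have e3 : (2:ℝ) ^ ((p:ℤ) - 1) * 2 = 2 ^ (p:ℤ) := by
          rw [← zpow_add_one₀ two_ne]
          congr 1
          omega
        have e4 : (1:ℝ) ≤ 2 ^ ((p:ℤ) - 1) := by
          have := zpow_le_zpow_right₀ (one_le_two : (1:ℝ) ≤ 2) (show (0:ℤ) ≤ (p:ℤ) - 1 by omega)
          simpa using this
        linarith
      nlinarith
    linarith [t2, t3 ▸ t2]
  -- so fl x is a multiple of 2^(e+k-1), hence of 2^e
  obtain ⟨S1, hS1⟩ := multiple_of_large p hp (hmem x) (e + (k:ℤ) - 1) hfl_low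
  refine ⟨S1 * 2 ^ (k - 1), ?_⟩
  rw [hS1]
  push_cast
  rw [← zpow_natCast (2:ℝ) (k-1), mul_assoc, ← zpow_add₀ two_ne]
  congr 2
  omega


lemma binade {p : ℕ} {X : ℤ} (h : 2 ^ p ≤ |X|) :
    ∃ k : ℕ, 2 ^ (p + k) ≤ |X| ∧ |X| < 2 ^ (p + k + 1) := by
  set N := X.natAbs with hNd
  have hN : |X| = (N:ℤ) := Int.abs_eq_natAbs X
  have hpN : (2:ℕ) ^ p ≤ N := by
    rw [hN] at h; exact_mod_cast h
  have hN0 : N ≠ 0 := by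
    have : 0 < 2 ^ p := pow_pos (by norm_num) p
    omega
  set n := Nat.log 2 N with hnd
  have hlow : 2 ^ n ≤ N := Nat.pow_log_le_self 2 hN0
  have hhigh : N < 2 ^ (n + 1) := Nat.lt_pow_succ_log_self (by norm_num) N
  have hpn : p ≤ n := by
    by_contra hc
    push_neg at hc
    have := Nat.pow_le_pow_right (by norm_num : 1 ≤ 2) (show n + 1 ≤ p by omega)
    omega
  have h1 : p + (n - p) = n := by omega
  refine ⟨n - p, ?_, ?_⟩
  · rw [h1, hN]; exact_mod_cast hlow
  · rw [h1, hN]; exact_mod_cast hhigh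


/-- coefficient extraction: from (Z:ℝ)*2^e = (W:ℝ)*2^e deduce Z = W -/
lemma coeff_eq {Z W e : ℤ} (h : (Z:ℝ) * 2 ^ e = (W:ℝ) * 2 ^ e) : Z = W := by
  have he : (0:ℝ) < 2 ^ e := by positivity
  have : (Z:ℝ) = (W:ℝ) := by
    have := mul_right_cancel₀ (ne_of_gt he) h
    exact this
  exact_mod_cast this


lemma npow_cast (m : ℕ) : (((2:ℤ) ^ m : ℤ):ℝ) = (2:ℝ) ^ (m:ℤ) := by
  push_cast
  rw [← zpow_natCast (2:ℝ) m]

/-- Core lemma: both `fl(a+b) - a` and the rounding error are representable. -/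
lemma core (p : ℕ) (hp : 0 < p) (fl : ℝ → ℝ)
    (hmem : ∀ x : ℝ, fl x ∈ Fp p)
    (hnear : ∀ x : ℝ, ∀ y ∈ Fp p, |fl x - x| ≤ |y - x|)
    (a b : ℝ) (A B e : ℤ) (hA : a = (A:ℝ) * 2 ^ e) (hBe : b = (B:ℝ) * 2 ^ e)
    (hB : |B| < 2 ^ p) (haF : a ∈ Fp p) :
    (fl (a + b) - a) ∈ Fp p ∧ ((a + b) - fl (a + b)) ∈ Fp p := by
  have he0 : (0:ℝ) < 2 ^ e := by positivity
  have hx : a + b = ((A + B : ℤ):ℝ) * 2 ^ e := by rw [hA, hBe]; push_cast; ring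
  obtain ⟨S, hS⟩ := fl_multiple p hp fl hmem hnear (A + B) e
  set s := fl (a + b) with hs
  have hsS : s = (S:ℝ) * 2 ^ e := by rw [hs, hx]; exact hS
  -- the rounding error r = (a+b) - s  has |r| ≤ |b|
  have hrb : |(a + b) - s| ≤ |b| := by
    have h1 := hnear (a + b) a haF
    have h2 : |a - (a + b)| = |b| := by rw [abs_sub_comm]; congr 1; ring
    rw [abs_sub_comm]
    rw [h2] at h1
    exact h1
  have hrR : (a + b) - s = ((A + B - S : ℤ):ℝ) * 2 ^ e := by
    rw [hsS, hx]; push_cast; ring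
  set R : ℤ := A + B - S with hRdef
  have hRB : |R| ≤ |B| := by
    have e1 : |(R:ℝ)| * 2 ^ e ≤ |(B:ℝ)| * 2 ^ e := by
      have q1 : |(R:ℝ) * 2 ^ e| = |(R:ℝ)| * 2 ^ e := by rw [abs_mul, abs_of_pos he0]
      have q2 : |(B:ℝ) * 2 ^ e| = |(B:ℝ)| * 2 ^ e := by rw [abs_mul, abs_of_pos he0]
      rw [← q1, ← q2, ← hrR, ← hBe]
      exact hrb
    have e2 : |(R:ℝ)| ≤ |(B:ℝ)| := le_of_mul_le_mul_right e1 he0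
    rw [← Int.cast_abs, ← Int.cast_abs] at e2
    exact_mod_cast e2
  have hrF : ((a + b) - s) ∈ Fp p := ⟨R, e, lt_of_le_of_lt hRB hB, hrR⟩
  have hzZ : s - a = ((S - A : ℤ):ℝ) * 2 ^ e := by
    rw [hsS, hA]; push_cast; ring
  set Z : ℤ := S - A with hZdef
  by_cases hZp : |Z| < 2 ^ p
  · exact ⟨⟨Z, e, hZp, hzZ⟩, hrF⟩
  push_neg at hZp
  -- now 2^p ≤ |Z|; show Z is even and |Z| < 2^(p+1)
  have habsZ : |Z| ≤ |B| + |R| := by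
    have hq : Z = B - R := by omega
    rw [hq, sub_eq_add_neg]
    calc |B + -R| ≤ |B| + |-R| := abs_add_le _ _
      _ = |B| + |R| := by rw [abs_neg]
  have hZub : |Z| < 2 ^ (p + 1) := by
    have hq : (2:ℤ) ^ (p+1) = 2 ^ p + 2 ^ p := by ring
    linarith
  have hR1 : 1 ≤ |R| := by linarith
  -- a+b cannot be representable at exponent e (else R = 0)
  have hXl : 2 ^ p ≤ |A + B| := by
    by_contra hc
    push_neg at hc
    have hxF : (a + b) ∈ Fp p := ⟨A + B, e, hc, hx⟩
    have hfix : s = a + b := flFix hnear hxF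
    have hq : (R:ℝ) * 2 ^ e = ((0:ℤ):ℝ) * 2 ^ e := by
      rw [← hrR, hfix]; simp
    have hR02 := coeff_eq hq
    rw [hR02] at hR1
    simp at hR1
  obtain ⟨k, hk2, hk3⟩ := binade hXl
  -- error bound: |r| ≤ 2^(e+k)
  have hxub : |a + b| ≤ 2 ^ (p:ℤ) * 2 ^ (e + (k:ℤ) + 1) := by
    rw [hx, abs_mul, abs_of_pos he0]
    have c1 : |((A + B : ℤ):ℝ)| ≤ 2 ^ ((p:ℤ) + (k:ℤ) + 1) := by
      have hexp : (2:ℝ) ^ ((p:ℤ) + (k:ℤ) + 1) = (((2:ℤ) ^ (p + k + 1) : ℤ):ℝ) := by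
        rw [npow_cast]
        congr 1
      rw [← Int.cast_abs, hexp]
      exact_mod_cast hk3.le
    calc |((A + B : ℤ):ℝ)| * 2 ^ e ≤ 2 ^ ((p:ℤ) + (k:ℤ) + 1) * 2 ^ e :=
          mul_le_mul_of_nonneg_right c1 he0.le
      _ = 2 ^ (p:ℤ) * 2 ^ (e + (k:ℤ) + 1) := by
          rw [← zpow_add₀ two_ne, ← zpow_add₀ two_ne]; ring_nf
  have herr : |s - (a + b)| ≤ 2 ^ (e + (k:ℤ) + 1) / 2 :=
    round_err p hp fl hnear (a + b) _ hxub
  have hhalf : (2:ℝ) ^ (e + (k:ℤ) + 1) / 2 = 2 ^ (e + (k:ℤ)) := by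
    rw [zpow_add_one₀ two_ne]; ring
  rw [hhalf] at herr
  -- |R| ≤ 2^k
  have hRk : |R| ≤ 2 ^ k := by
    have e1 : |(R:ℝ)| * 2 ^ e ≤ 2 ^ ((k:ℤ)) * 2 ^ e := by
      have q1 : |(R:ℝ) * 2 ^ e| = |(R:ℝ)| * 2 ^ e := by rw [abs_mul, abs_of_pos he0]
      have q2 : (2:ℝ) ^ (e + (k:ℤ)) = 2 ^ ((k:ℤ)) * 2 ^ e := by
        rw [← zpow_add₀ two_ne]; ring_nf
      rw [← q1, ← hrR]
      rw [abs_sub_comm] at herr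
      rw [← q2]
      exact herr
    have e2 : |(R:ℝ)| ≤ 2 ^ ((k:ℤ)) := le_of_mul_le_mul_right e1 he0
    have e3 : ((|R|:ℤ):ℝ) ≤ (((2:ℤ) ^ k : ℤ):ℝ) := by
      rw [npow_cast, Int.cast_abs]; exact e2
    exact_mod_cast e3
  rcases Nat.eq_zero_or_pos k with hk0 | hkpos
  · -- k = 0 : forced |Z| = 2^p
    subst hk0
    have hReq : |R| = 1 := le_antisymm (by simpa using hRk) hR1
    have hZeq : |Z| = 2 ^ p := by
      have hq : |Z| ≤ 2 ^ p := by
        have hq2 : (2:ℤ) ^ p = (2 ^ p - 1) + 1 := by ring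
        linarith [habsZ, hB, hReq]
      exact le_antisymm hq hZp
    have hdvd : 2 ∣ Z := by
      have hq : (2:ℤ) ∣ |Z| := by
        rw [hZeq]
        exact dvd_pow_self 2 (by omega)
      exact (dvd_abs 2 Z).mp hq
    exact ⟨by rw [hzZ]; exact mem_of_even p Z e hdvd hZub, hrF⟩
  · -- k ≥ 1 : both a and s are multiples of 2^(e+k), so Z is even
    -- lower bound on |a+b|
    have hxlb : (2:ℝ) ^ ((p:ℤ) + (k:ℤ)) * 2 ^ e ≤ |a + b| := by
      rw [hx, abs_mul, abs_of_pos he0]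
      have c1 : (2:ℝ) ^ ((p:ℤ) + (k:ℤ)) ≤ |((A + B : ℤ):ℝ)| := by
        have hexp : (2:ℝ) ^ ((p:ℤ) + (k:ℤ)) = (((2:ℤ) ^ (p + k) : ℤ):ℝ) := by
          rw [npow_cast]
          congr 1
        rw [← Int.cast_abs, hexp]
        exact_mod_cast hk2
      exact mul_le_mul_of_nonneg_right c1 he0.le
    -- |a| ≥ 2^(p-1) * 2^(e+k)
    have halb : (2:ℝ) ^ ((p:ℤ) - 1) * 2 ^ (e + (k:ℤ)) ≤ |a| := by
      have hbub : |b| ≤ (2 ^ (p:ℤ) - 1) * 2 ^ e := by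
        rw [hBe, abs_mul, abs_of_pos he0]
        have hq : |(B:ℝ)| ≤ 2 ^ (p:ℤ) - 1 := by
          have hq2 : ((|B|:ℤ):ℝ) ≤ (((2:ℤ)^p - 1 : ℤ):ℝ) := by
            exact_mod_cast (by omega : |B| ≤ 2^p - 1)
          rw [Int.cast_abs] at hq2
          push_cast at hq2
          rw [← zpow_natCast (2:ℝ) p] at hq2
          exact hq2
        exact mul_le_mul_of_nonneg_right hq he0.le
      have htri : |a + b| - |b| ≤ |a| := by
        have hq := abs_add_le a b
        calc |a + b| - |b| ≤ (|a| + |b|) - |b| := by linarith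
          _ = |a| := by ring
      have key : (2:ℝ) ^ ((p:ℤ) - 1) * 2 ^ (e + (k:ℤ)) ≤ 2 ^ ((p:ℤ) + (k:ℤ)) * 2 ^ e - (2 ^ (p:ℤ) - 1) * 2 ^ e := by
        have q1 : (2:ℝ) ^ ((p:ℤ) - 1) * 2 ^ (e + (k:ℤ)) = 2 ^ ((p:ℤ) + (k:ℤ) - 1) * 2 ^ e := by
          rw [← zpow_add₀ two_ne, ← zpow_add₀ two_ne]; ring_nf
        have q2 : (2:ℝ) ^ ((p:ℤ) + (k:ℤ)) = 2 ^ ((p:ℤ) + (k:ℤ) - 1) * 2 := by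
          rw [← zpow_add_one₀ two_ne]; congr 1; ring
        have q3 : (2:ℝ) ^ (p:ℤ) ≤ 2 ^ ((p:ℤ) + (k:ℤ) - 1) :=
          zpow_le_zpow_right₀ one_le_two (by omega)
        have q4 : (0:ℝ) < 2 ^ ((p:ℤ) + (k:ℤ) - 1) := by positivity
        rw [q1, q2]
        nlinarith [mul_le_mul_of_nonneg_right q3 he0.le]
      linarith
    obtain ⟨na, hna⟩ := multiple_of_large p hp haF (e + (k:ℤ)) halb
    -- |s| ≥ 2^(p-1) * 2^(e+k)
    have hslb : (2:ℝ) ^ ((p:ℤ) - 1) * 2 ^ (e + (k:ℤ)) ≤ |s| := by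
      have htri : |a + b| ≤ |s| + |s - (a + b)| := by
        calc |a + b| = |s - (s - (a + b))| := by congr 1; ring
          _ ≤ |s| + |s - (a + b)| := abs_sub _ _
      have key : (2:ℝ) ^ ((p:ℤ) - 1) * 2 ^ (e + (k:ℤ)) ≤ 2 ^ ((p:ℤ) + (k:ℤ)) * 2 ^ e - 2 ^ (e + (k:ℤ)) := by
        have q1 : (2:ℝ) ^ ((p:ℤ) + (k:ℤ)) * 2 ^ e = 2 ^ (p:ℤ) * 2 ^ (e + (k:ℤ)) := by
          rw [← zpow_add₀ two_ne, ← zpow_add₀ two_ne]; ring_nf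
        have q2 : (2:ℝ) ^ ((p:ℤ) - 1) * 2 = 2 ^ (p:ℤ) := by
          rw [← zpow_add_one₀ two_ne]; congr 1; ring
        have q3 : (1:ℝ) ≤ 2 ^ ((p:ℤ) - 1) := by
          have := zpow_le_zpow_right₀ (one_le_two : (1:ℝ) ≤ 2) (show (0:ℤ) ≤ (p:ℤ) - 1 by omega)
          simpa using this
        have q4 : (0:ℝ) < 2 ^ (e + (k:ℤ)) := by positivity
        rw [q1]
        nlinarith [mul_le_mul_of_nonneg_right q3 q4.le, q2]
      linarith
    have hsF : s ∈ Fp p := hs ▸ hmem (a + b)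
    obtain ⟨ns, hns⟩ := multiple_of_large p hp hsF (e + (k:ℤ)) hslb
    have hz3 : (Z:ℝ) * 2 ^ e = (((ns - na) * 2 ^ k : ℤ):ℝ) * 2 ^ e := by
      rw [← hzZ, hns, hna]
      push_cast
      rw [← zpow_natCast (2:ℝ) k, zpow_add₀ two_ne]
      ring
    have hZeq : Z = (ns - na) * 2 ^ k := coeff_eq hz3
    have hdvd : 2 ∣ Z := by
      rw [hZeq]
      exact Dvd.dvd.mul_left (dvd_pow_self 2 (by omega)) _
    exact ⟨by rw [hzZ]; exact mem_of_even p Z e hdvd hZub, hrF⟩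

lemma common_exp (p : ℕ) {a b : ℝ} (ha : a ∈ Fp p) (hb : b ∈ Fp p) (hab : |b| ≤ |a|) :
    ∃ A B e : ℤ, a = (A:ℝ) * 2 ^ e ∧ b = (B:ℝ) * 2 ^ e ∧ |B| < 2 ^ p := by
  obtain ⟨ma, ea, hma, ha'⟩ := ha
  obtain ⟨mb, eb, hmb, hb'⟩ := hb
  rcases le_total ea eb with h | h
  · -- common exponent ea
    refine ⟨ma, mb * 2 ^ (eb - ea).toNat, ea, ha', ?_, ?_⟩
    · rw [hb']
      push_cast
      rw [← zpow_natCast (2:ℝ) (eb-ea).toNat, Int.toNat_of_nonneg (by omega),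
        mul_assoc, ← zpow_add₀ two_ne]
      ring_nf
    · have hbB : b = ((mb * 2 ^ (eb - ea).toNat : ℤ):ℝ) * 2 ^ ea := by
        rw [hb']
        push_cast
        rw [← zpow_natCast (2:ℝ) (eb-ea).toNat, Int.toNat_of_nonneg (by omega),
          mul_assoc, ← zpow_add₀ two_ne]
        ring_nf
      set B : ℤ := mb * 2 ^ (eb - ea).toNat with hBd
      have he0 : (0:ℝ) < 2 ^ ea := by positivity
      have h1 : |(B:ℝ)| * 2 ^ ea ≤ |(ma:ℝ)| * 2 ^ ea := by
        have q1 : |(B:ℝ)| * 2 ^ ea = |b| := by rw [hbB, abs_mul, abs_of_pos he0]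
        have q2 : |(ma:ℝ)| * 2 ^ ea = |a| := by rw [ha', abs_mul, abs_of_pos he0]
        rw [q1, q2]; exact hab
      have h2 : |(B:ℝ)| ≤ |(ma:ℝ)| := le_of_mul_le_mul_right h1 he0
      have h3 : |(B:ℝ)| < 2 ^ (p:ℤ) := lt_of_le_of_lt h2 (cast_lt_pow hma)
      have h4 : ((|B|:ℤ):ℝ) < (((2:ℤ) ^ p : ℤ):ℝ) := by
        rw [Int.cast_abs, npow_cast]
        exact h3
      exact_mod_cast h4
  · -- common exponent eb
    refine ⟨ma * 2 ^ (ea - eb).toNat, mb, eb, ?_, hb', hmb⟩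
    rw [ha']
    push_cast
    rw [← zpow_natCast (2:ℝ) (ea-eb).toNat, Int.toNat_of_nonneg (by omega),
      mul_assoc, ← zpow_add₀ two_ne]
    ring_nf

end QTS

/-- Dekker's QuickTwoSum (Fast2Sum) is an error-free transformation:
if `|a| ≥ |b|`, `s = fl(a+b)` and `t = fl(b - fl(s-a))`, then `s + t = a + b`. -/
theorem quickTwoSum_exact (p : ℕ) (hp : 0 < p) (fl : ℝ → ℝ)
    (hmem : ∀ x : ℝ, fl x ∈ Fp p)
    (hnear : ∀ x : ℝ, ∀ y ∈ Fp p, |fl x - x| ≤ |y - x|)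
    (a b : ℝ) (ha : a ∈ Fp p) (hb : b ∈ Fp p) (hab : |b| ≤ |a|)
    (s t : ℝ) (hs : s = fl (a + b)) (ht : t = fl (b - fl (s - a))) :
    s + t = a + b := by
  obtain ⟨A, B, e, hA, hB, hBlt⟩ := QTS.common_exp p ha hb hab
  obtain ⟨hz, hr⟩ := QTS.core p hp fl hmem hnear a b A B e hA hB hBlt ha
  rw [← hs] at hz hr
  have h1 : fl (s - a) = s - a := QTS.flFix hnear hz
  have h2 : b - fl (s - a) = (a + b) - s := by rw [h1]; ring
  rw [h2] at ht
  have h3 : t = (a + b) - s := by rw [ht]; exact QTS.flFix hnear hr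
  rw [h3]; ring
end

section
/- Let a, b be any floating-point numbers and fl round-to-nearest in radix 2. Define s = fl(a+b), v = fl(s - a), e = fl(fl(a - fl(s - v)) + fl(b - v)). Then s + e = a + b exactly (Knuth's TwoSum is an error-free transformation without any assumption on |a|, |b|). -/
noncomputable def dyadicGrid (q : ℤ) : AddSubgroup ℝ := AddSubgroup.zmultiples ((2 : ℝ) ^ q)

lemma mem_dyadicGrid_iff {q : ℤ} {x : ℝ} :
    x ∈ dyadicGrid q ↔ ∃ k : ℤ, x = k * 2 ^ q := by
  simp only [dyadicGrid, AddSubgroup.mem_zmultiples_iff, zsmul_eq_mul, eq_comm]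

lemma dyadicGrid_antitone : Antitone dyadicGrid := by
  intro q r hqr
  rw [dyadicGrid, AddSubgroup.zmultiples_le, mem_dyadicGrid_iff]
  refine ⟨2 ^ (r - q).toNat, ?_⟩
  rw [Int.cast_pow, Int.cast_ofNat, ← zpow_natCast, Int.toNat_of_nonneg (by omega),
    ← zpow_add₀ two_ne_zero, sub_add_cancel]

namespace Fp

variable {p : ℕ}

lemma neg_mem {x : ℝ} (hx : x ∈ Fp p) : -x ∈ Fp p := by
  obtain ⟨m, e, hm, rfl⟩ := hx
  exact ⟨-m, e, by rwa [abs_neg], by push_cast; ring⟩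

lemma two_zpow_mem (hp : 0 < p) (e : ℤ) : (2 : ℝ) ^ e ∈ Fp p :=
  ⟨1, e, by simpa using one_lt_pow₀ (one_lt_two : (1 : ℤ) < 2) hp.ne', by simp⟩

lemma abs_add_two_zpow_le {m e : ℤ} (hm : |m| < 2 ^ p) :
    |(m : ℝ) * 2 ^ e| + 2 ^ e ≤ 2 ^ ((p : ℤ) + e) := by
  have hm' : |(m : ℝ)| + 1 ≤ 2 ^ p := by exact_mod_cast Int.add_one_le_of_lt hm
  rw [abs_mul, abs_of_pos (zpow_pos (two_pos (α := ℝ)) e), zpow_add₀ two_ne_zero, zpow_natCast]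
  nlinarith [zpow_pos (two_pos (α := ℝ)) e]

lemma exists_mem_dyadicGrid {x : ℝ} (hx : x ∈ Fp p) :
    ∃ e : ℤ, x ∈ dyadicGrid e ∧ |x| + 2 ^ e ≤ 2 ^ ((p : ℤ) + e) := by
  obtain ⟨m, e, hm, rfl⟩ := hx
  exact ⟨e, mem_dyadicGrid_iff.2 ⟨m, rfl⟩, abs_add_two_zpow_le hm⟩

lemma mem_dyadicGrid_of_le_abs {x : ℝ} (hx : x ∈ Fp p) {E : ℤ}
    (h : 2 ^ ((p : ℤ) + E - 1) ≤ |x|) : x ∈ dyadicGrid E := by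
  obtain ⟨m, e, hm, rfl⟩ := hx
  have hlt : (2 : ℝ) ^ ((p : ℤ) + E - 1) < 2 ^ ((p : ℤ) + e) := by
    linarith [abs_add_two_zpow_le (e := e) hm, zpow_pos (two_pos (α := ℝ)) e]
  rw [zpow_lt_zpow_iff_right₀ one_lt_two] at hlt
  exact dyadicGrid_antitone (by omega : E ≤ e) (mem_dyadicGrid_iff.2 ⟨m, rfl⟩)

lemma mem_of_mem_dyadicGrid (hp : 0 < p) {q : ℤ} {x : ℝ} (hx : x ∈ dyadicGrid q)
    (h : |x| ≤ 2 ^ ((p : ℤ) + q)) : x ∈ Fp p := by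
  rcases h.lt_or_eq with h | h
  · obtain ⟨k, rfl⟩ := mem_dyadicGrid_iff.1 hx
    refine ⟨k, q, ?_, rfl⟩
    rw [abs_mul, abs_of_pos (zpow_pos (two_pos (α := ℝ)) q), zpow_add₀ two_ne_zero,
      zpow_natCast, mul_lt_mul_iff_left₀ (zpow_pos two_pos q)] at h
    exact_mod_cast h
  · rcases (abs_eq (zpow_pos two_pos _).le).1 h with rfl | rfl
    · exact two_zpow_mem hp _
    · exact neg_mem (two_zpow_mem hp _)

lemma mem_of_mem_dyadicGrid_of_abs_le_succ (hp : 0 < p) {q : ℤ} {x : ℝ}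
    (hx : x ∈ dyadicGrid q) (h : |x| ≤ 2 ^ ((p : ℤ) + q + 1))
    (hcoarse : 2 ^ ((p : ℤ) + q) < |x| → x ∈ dyadicGrid (q + 1)) : x ∈ Fp p := by
  by_cases hle : |x| ≤ 2 ^ ((p : ℤ) + q)
  · exact mem_of_mem_dyadicGrid hp hx hle
  · exact mem_of_mem_dyadicGrid hp (hcoarse (not_le.1 hle)) (by rwa [← add_assoc])

end Fp

structure IsRoundNearest (p : ℕ) (fl : ℝ → ℝ) : Prop where
  mem : ∀ x, fl x ∈ Fp p
  abs_sub_le : ∀ x, ∀ y ∈ Fp p, |fl x - x| ≤ |y - x|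

namespace IsRoundNearest

variable {p : ℕ} {fl : ℝ → ℝ}

lemma round_eq_self (hfl : IsRoundNearest p fl) {x : ℝ} (hx : x ∈ Fp p) : fl x = x := by
  simpa [sub_eq_zero] using hfl.abs_sub_le x x hx

lemma abs_round_add_sub_le (hfl : IsRoundNearest p fl) {a b : ℝ} (hb : b ∈ Fp p) :
    |fl (a + b) - (a + b)| ≤ |a| := by
  simpa using hfl.abs_sub_le (a + b) b hb

lemma le_abs_round (hfl : IsRoundNearest p fl) {c x : ℝ} (hc : c ∈ Fp p)
    (h : c ≤ |x|) : c ≤ |fl x| := by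
  obtain ⟨y, hy, hyx⟩ : ∃ y ∈ Fp p, |y - x| = |x| - c := by
    rcases le_total 0 x with hx | hx
    · rw [abs_of_nonneg hx] at h ⊢
      exact ⟨c, hc, by rw [abs_of_nonpos (by linarith : c - x ≤ 0)]; ring⟩
    · rw [abs_of_nonpos hx] at h ⊢
      exact ⟨-c, Fp.neg_mem hc, by rw [abs_of_nonneg (by linarith : 0 ≤ -c - x)]; ring⟩
  linarith [hfl.abs_sub_le x y hy, abs_sub_abs_le_abs_sub x (fl x), abs_sub_comm x (fl x)]

lemma round_mem_dyadicGrid_of_le_abs (hfl : IsRoundNearest p fl) (hp : 0 < p) {E : ℤ} {x : ℝ}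
    (h : 2 ^ ((p : ℤ) + E - 1) ≤ |x|) : fl x ∈ dyadicGrid E :=
  Fp.mem_dyadicGrid_of_le_abs (hfl.mem x) (hfl.le_abs_round (Fp.two_zpow_mem hp _) h)

lemma round_mem_dyadicGrid (hfl : IsRoundNearest p fl) (hp : 0 < p) {q : ℤ} {x : ℝ}
    (hx : x ∈ dyadicGrid q) : fl x ∈ dyadicGrid q := by
  by_cases hle : |x| ≤ 2 ^ ((p : ℤ) + q)
  · rwa [hfl.round_eq_self (Fp.mem_of_mem_dyadicGrid hp hx hle)]
  · refine dyadicGrid_antitone (by omega : q ≤ q + 1) (hfl.round_mem_dyadicGrid_of_le_abs hp ?_)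
    rw [show (p : ℤ) + (q + 1) - 1 = p + q by ring]
    exact (not_le.1 hle).le

lemma abs_round_sub_le (hfl : IsRoundNearest p fl) (hp : 0 < p) {E : ℤ} {x : ℝ}
    (h : |x| ≤ 2 ^ ((p : ℤ) + E + 1)) : |fl x - x| ≤ 2 ^ E := by
  have hE : (0 : ℝ) < 2 ^ (E + 1) := zpow_pos two_pos _
  set k := round (x / 2 ^ (E + 1))
  have hk : |x / 2 ^ (E + 1) - k| ≤ 1 / 2 := abs_sub_round _
  have hk_mem : (k : ℝ) * 2 ^ (E + 1) ∈ Fp p := by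
    refine Fp.mem_of_mem_dyadicGrid hp (mem_dyadicGrid_iff.2 ⟨k, rfl⟩) ?_
    have hx' : |x / 2 ^ (E + 1)| ≤ 2 ^ p := by
      rwa [abs_div, abs_of_pos hE, div_le_iff₀ hE, ← zpow_natCast, ← zpow_add₀ two_ne_zero,
        ← add_assoc]
    have hk_le : |k| ≤ 2 ^ p := by
      have : |(k : ℝ)| < 2 ^ p + 1 := by
        linarith [abs_sub_abs_le_abs_sub (k : ℝ) (x / 2 ^ (E + 1)),
          abs_sub_comm (k : ℝ) (x / 2 ^ (E + 1))]
      have : |k| < 2 ^ p + 1 := by exact_mod_cast this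
      omega
    rw [abs_mul, abs_of_pos hE, zpow_add₀ two_ne_zero (p : ℤ), zpow_natCast]
    exact mul_le_mul_of_nonneg_right (by exact_mod_cast hk_le) hE.le
  calc |fl x - x| ≤ |k * 2 ^ (E + 1) - x| := hfl.abs_sub_le x _ hk_mem
    _ = |x / 2 ^ (E + 1) - k| * 2 ^ (E + 1) := by
      rw [← abs_of_pos hE, ← abs_mul, abs_of_pos hE, abs_sub_comm]; field_simp
    _ ≤ 1 / 2 * 2 ^ (E + 1) := by gcongr
    _ = 2 ^ E := by rw [zpow_add_one₀ two_ne_zero]; ring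

lemma lt_abs_of_lt_abs_round_sub (hfl : IsRoundNearest p fl) (hp : 0 < p) {E : ℤ} {x : ℝ}
    (h : 2 ^ E < |fl x - x|) : 2 ^ ((p : ℤ) + E + 1) < |x| :=
  lt_of_not_ge fun hx => (hfl.abs_round_sub_le hp hx).not_gt h

lemma round_mem_dyadicGrid_of_lt_abs_round_sub (hfl : IsRoundNearest p fl) (hp : 0 < p)
    {E : ℤ} {x : ℝ} (h : 2 ^ E < |fl x - x|) : fl x ∈ dyadicGrid (E + 2) := by
  refine hfl.round_mem_dyadicGrid_of_le_abs hp ?_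
  rw [show (p : ℤ) + (E + 2) - 1 = p + E + 1 by ring]
  exact (hfl.lt_abs_of_lt_abs_round_sub hp h).le

lemma add_sub_round_mem (hfl : IsRoundNearest p fl) (hp : 0 < p) {a b : ℝ} (ha : a ∈ Fp p)
    (hb : b ∈ Fp p) : a + b - fl (a + b) ∈ Fp p := by
  obtain ⟨ea, hga, hA⟩ := Fp.exists_mem_dyadicGrid ha
  obtain ⟨eb, hgb, hB⟩ := Fp.exists_mem_dyadicGrid hb
  have hgab : a + b ∈ dyadicGrid (min ea eb) :=
    add_mem (dyadicGrid_antitone (min_le_left _ _) hga)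
      (dyadicGrid_antitone (min_le_right _ _) hgb)
  refine Fp.mem_of_mem_dyadicGrid hp (sub_mem hgab (hfl.round_mem_dyadicGrid hp hgab)) ?_
  have hεa : |fl (a + b) - (a + b)| ≤ |a| := hfl.abs_round_add_sub_le hb
  have hεb : |fl (a + b) - (a + b)| ≤ |b| := by
    simpa only [add_comm b] using hfl.abs_round_add_sub_le (a := b) ha
  rw [abs_sub_comm]
  rcases min_choice ea eb with h | h <;> rw [h]
  · linarith [zpow_pos (two_pos (α := ℝ)) ea]
  · linarith [zpow_pos (two_pos (α := ℝ)) eb]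

lemma round_add_sub_left_mem (hfl : IsRoundNearest p fl) (hp : 0 < p) {a b : ℝ} (ha : a ∈ Fp p)
    {ea eb : ℤ} (hga : a ∈ dyadicGrid ea) (hgb : b ∈ dyadicGrid eb)
    (hA : |a| + 2 ^ ea ≤ 2 ^ ((p : ℤ) + ea)) (hB : |b| + 2 ^ eb ≤ 2 ^ ((p : ℤ) + eb))
    (hle : eb ≤ ea) : fl (a + b) - a ∈ Fp p := by
  set s := fl (a + b)
  have hga' : a ∈ dyadicGrid eb := dyadicGrid_antitone hle hga
  have hgs : s ∈ dyadicGrid eb := hfl.round_mem_dyadicGrid hp (add_mem hga' hgb)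
  have hε : |s - (a + b)| ≤ |b| := by
    simpa only [add_comm b] using hfl.abs_round_add_sub_le (a := b) ha
  have hsa : |s - a| ≤ |s - (a + b)| + |b| := by
    simpa only [sub_add_eq_sub_sub, sub_add_cancel] using abs_add_le (s - (a + b)) b
  have hpow : (2 : ℝ) ^ ((p : ℤ) + eb + 1) = 2 ^ ((p : ℤ) + eb) * 2 :=
    zpow_add_one₀ two_ne_zero _
  have := zpow_pos (two_pos (α := ℝ)) eb
  refine Fp.mem_of_mem_dyadicGrid_of_abs_le_succ hp (sub_mem hgs hga') (by linarith)
    fun hbig => ?_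
  have hε' : 2 ^ eb < |s - (a + b)| := by linarith
  have hsum : 2 ^ ((p : ℤ) + eb + 1) < |a + b| := hfl.lt_abs_of_lt_abs_round_sub hp hε'
  have hea : eb + 1 ≤ ea := by
    by_contra! h
    obtain rfl : ea = eb := by omega
    linarith [abs_add_le a b]
  exact sub_mem
    (dyadicGrid_antitone (by omega) (hfl.round_mem_dyadicGrid_of_lt_abs_round_sub hp hε'))
    (dyadicGrid_antitone hea hga)

lemma twoSum_sub_mem_of_mem_dyadicGrid (hfl : IsRoundNearest p fl) (hp : 0 < p) {a b : ℝ}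
    (hb : b ∈ Fp p) {e : ℤ} (hga : a ∈ dyadicGrid e) (hgb : b ∈ dyadicGrid e)
    (hA : |a| + 2 ^ e ≤ 2 ^ ((p : ℤ) + e)) :
    fl (a + b) - fl (fl (a + b) - a) ∈ Fp p ∧ b - fl (fl (a + b) - a) ∈ Fp p := by
  set s := fl (a + b)
  set v := fl (s - a)
  have hgs : s ∈ dyadicGrid e := hfl.round_mem_dyadicGrid hp (add_mem hga hgb)
  have hgv : v ∈ dyadicGrid e := hfl.round_mem_dyadicGrid hp (sub_mem hgs hga)
  have hε : |s - (a + b)| ≤ |a| := hfl.abs_round_add_sub_le hb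
  have hδ : |v - (s - a)| ≤ |s - (a + b)| := by
    have := hfl.abs_sub_le (s - a) b hb
    rwa [show b - (s - a) = -(s - (a + b)) by ring, abs_neg] at this
  have hpow : (2 : ℝ) ^ ((p : ℤ) + e + 1) = 2 ^ ((p : ℤ) + e) * 2 :=
    zpow_add_one₀ two_ne_zero _
  have := zpow_pos (two_pos (α := ℝ)) e
  constructor
  · have hsv : |s - v| ≤ |a| + |v - (s - a)| := by
      rw [show s - v = a - (v - (s - a)) by ring]
      exact abs_sub _ _
    refine Fp.mem_of_mem_dyadicGrid_of_abs_le_succ hp (sub_mem hgs hgv) (by linarith)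
      fun hbig => ?_
    have hδ' : 2 ^ e < |v - (s - a)| := by linarith
    have hsa : 2 ^ ((p : ℤ) + e + 1) < |s - a| := hfl.lt_abs_of_lt_abs_round_sub hp hδ'
    have hgs' : s ∈ dyadicGrid (e + 1) := by
      refine Fp.mem_dyadicGrid_of_le_abs (hfl.mem _) ?_
      rw [show (p : ℤ) + (e + 1) - 1 = p + e by ring]
      linarith [abs_sub s a]
    exact sub_mem hgs' (dyadicGrid_antitone (by omega)
      (hfl.round_mem_dyadicGrid_of_lt_abs_round_sub hp hδ'))
  · have hbv : |b - v| ≤ |s - (a + b)| + |v - (s - a)| := by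
      rw [show b - v = -(s - (a + b)) - (v - (s - a)) by ring, ← abs_neg (s - (a + b))]
      exact abs_sub _ _
    refine Fp.mem_of_mem_dyadicGrid_of_abs_le_succ hp (sub_mem hgb hgv) (by linarith)
      fun hbig => ?_
    have hε' : 2 ^ e < |s - (a + b)| := by linarith
    have hδ' : 2 ^ e < |v - (s - a)| := by linarith
    have hab : 2 ^ ((p : ℤ) + e + 1) < |a + b| := hfl.lt_abs_of_lt_abs_round_sub hp hε'
    have hgb' : b ∈ dyadicGrid (e + 1) := by
      refine Fp.mem_dyadicGrid_of_le_abs hb ?_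
      rw [show (p : ℤ) + (e + 1) - 1 = p + e by ring]
      linarith [abs_add_le a b]
    exact sub_mem hgb' (dyadicGrid_antitone (by omega)
      (hfl.round_mem_dyadicGrid_of_lt_abs_round_sub hp hδ'))

lemma twoSum_sub_mem (hfl : IsRoundNearest p fl) (hp : 0 < p) {a b : ℝ} (ha : a ∈ Fp p)
    (hb : b ∈ Fp p) :
    fl (a + b) - fl (fl (a + b) - a) ∈ Fp p ∧ b - fl (fl (a + b) - a) ∈ Fp p := by
  obtain ⟨ea, hga, hA⟩ := Fp.exists_mem_dyadicGrid ha
  obtain ⟨eb, hgb, hB⟩ := Fp.exists_mem_dyadicGrid hb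
  rcases le_total eb ea with hle | hle
  · rw [hfl.round_eq_self (hfl.round_add_sub_left_mem hp ha hga hgb hA hB hle), sub_sub_cancel,
      sub_sub_eq_add_sub, add_comm b]
    exact ⟨ha, hfl.add_sub_round_mem hp ha hb⟩
  · exact hfl.twoSum_sub_mem_of_mem_dyadicGrid hp hb hga (dyadicGrid_antitone hle hgb) hA

end IsRoundNearest

/-- Knuth's TwoSum is an error-free transformation without any assumption on
the magnitudes of `a` and `b`. -/
theorem twoSum_exact (p : ℕ) (hp : 0 < p) (fl : ℝ → ℝ)
    (hmem : ∀ x : ℝ, fl x ∈ Fp p)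
    (hnear : ∀ x : ℝ, ∀ y ∈ Fp p, |fl x - x| ≤ |y - x|)
    (a b : ℝ) (ha : a ∈ Fp p) (hb : b ∈ Fp p)
    (s v e : ℝ) (hs : s = fl (a + b)) (hv : v = fl (s - a))
    (he : e = fl (fl (a - fl (s - v)) + fl (b - v))) :
    s + e = a + b := by
  have hfl : IsRoundNearest p fl := ⟨hmem, hnear⟩
  obtain ⟨hsv, hbv⟩ := hfl.twoSum_sub_mem hp ha hb
  rw [← hs, ← hv] at hsv hbv
  have hε : a + b - s ∈ Fp p := hs ▸ hfl.add_sub_round_mem hp ha hb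
  have hδ : a - (s - v) ∈ Fp p := by
    convert Fp.neg_mem (hfl.add_sub_round_mem hp (hfl.mem (a + b)) (Fp.neg_mem ha)) using 1
    rw [← hs, ← sub_eq_add_neg, ← hv]
    ring
  rw [he, hfl.round_eq_self hsv, hfl.round_eq_self hδ, hfl.round_eq_self hbv,
    show a - (s - v) + (b - v) = a + b - s by ring, hfl.round_eq_self hε]
  ring
end
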